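/- arXiv:2002.01823 — 2 statements merged into one kernel-verified Lean document; each statement's English description precedes it below -/
import Mathlib

section
/- With z = θ̂ + β(i) − θ, θ constant, and dynamics θ̂' = −(∂β/∂i)(i)·[L⁻¹Ωᵀ(i)(θ̂+β(i)) + L⁻¹u − ω̂ J i], and current dynamics i' = L⁻¹Ωᵀ(i)θ + L⁻¹u − ω̂ J i, with ∂β/∂i = k_z Ω(i), it holds z' = −(k_z/L) Ω(i)Ωᵀ(i) z. -/
open Matrix

def matJ : Matrix (Fin 2) (Fin 2) ℝ := !![0, -1; 1, 0]

/-- The regressor matrix Ω(i) ∈ ℝ^{3×2}, with Ω(i)ᵀ = (−i  I₂). -/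
def Omat (i : Fin 2 → ℝ) : Matrix (Fin 3) (Fin 2) ℝ := !![-(i 0), -(i 1); 1, 0; 0, 1]

/-- The I&I shaping map β(i) = k_z(−|i|²/2, i₁, i₂). -/
noncomputable def betaMap (kz : ℝ) (i : Fin 2 → ℝ) : Fin 3 → ℝ :=
  ![kz * (-((i 0) ^ 2 + (i 1) ^ 2) / 2), kz * i 0, kz * i 1]

/-!
The Jacobian of β is `k_z Ω(i)`, so along a trajectory `β(i)' = k_z Ω(i) i'`. The update law
for `θ̂` is `−k_z Ω(i)` applied to the current dynamics with the unknown `θ` replaced by its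
estimate `θ̂ + β(i)`; in the sum the terms in `u` and `ω̂ J i` cancel and only
`−k_z Ω(i) L⁻¹ Ω(i)ᵀ (θ̂ + β(i) − θ)` survives.
-/

theorem hasDerivAt_betaMap_comp (kz : ℝ) {i : ℝ → Fin 2 → ℝ} {v : Fin 2 → ℝ} {t : ℝ}
    (hi : HasDerivAt i v t) :
    HasDerivAt (fun s => betaMap kz (i s)) ((kz • Omat (i t)) *ᵥ v) t := by
  have h0 := hasDerivAt_pi.mp hi 0
  have h1 := hasDerivAt_pi.mp hi 1
  refine hasDerivAt_pi.mpr fun j => ?_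
  fin_cases j
  · have hnormSq := (h0.fun_pow 2).fun_add (h1.fun_pow 2)
    refine ((hnormSq.fun_neg.div_const 2).const_mul kz).congr_deriv ?_
    simp [Omat, mulVec, dotProduct, Fin.sum_univ_two]
    ring
  · exact (h0.const_mul kz).congr_deriv (by simp [Omat, mulVec, dotProduct, Fin.sum_univ_two])
  · exact (h1.const_mul kz).congr_deriv (by simp [Omat, mulVec, dotProduct, Fin.sum_univ_two])

theorem IandI_error_dynamics_general (L kz : ℝ)
    (θ : Fin 3 → ℝ) (θhat : ℝ → Fin 3 → ℝ) (i u : ℝ → Fin 2 → ℝ) (ωhat : ℝ → ℝ)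
    (hi : ∀ t : ℝ, HasDerivAt i
      ((1 / L) • (Omat (i t))ᵀ.mulVec θ + (1 / L) • u t - ωhat t • matJ.mulVec (i t)) t)
    (hθhat : ∀ t : ℝ, HasDerivAt θhat
      (-(kz • Omat (i t)).mulVec
        ((1 / L) • (Omat (i t))ᵀ.mulVec (θhat t + betaMap kz (i t)) + (1 / L) • u t -
          ωhat t • matJ.mulVec (i t))) t) :
    ∀ t : ℝ, HasDerivAt (fun t => θhat t + betaMap kz (i t) - θ)
      (-((kz / L) • (Omat (i t) * (Omat (i t))ᵀ)).mulVec
        (θhat t + betaMap kz (i t) - θ)) t := by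
  intro t
  refine (((hθhat t).add (hasDerivAt_betaMap_comp kz (hi t))).sub_const θ).congr_deriv ?_
  simp only [mulVec_add, mulVec_sub, mulVec_smul, smul_mulVec, ← mulVec_mulVec, smul_smul]
  module

/-- The I&I estimation error z = θ̂ + β(i) − θ obeys the gradient-descent flow
z' = −(k_z/L) Ω(i)Ω(i)ᵀ z. -/
theorem IandI_error_dynamics (L kz : ℝ) (hL : 0 < L) (hkz : 0 < kz)
    (θ : Fin 3 → ℝ) (θhat : ℝ → Fin 3 → ℝ) (i u : ℝ → Fin 2 → ℝ) (ωhat : ℝ → ℝ)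
    (hi : ∀ t : ℝ, HasDerivAt i
      ((1 / L) • (Omat (i t))ᵀ.mulVec θ + (1 / L) • u t - ωhat t • matJ.mulVec (i t)) t)
    (hθhat : ∀ t : ℝ, HasDerivAt θhat
      (-(kz • Omat (i t)).mulVec
        ((1 / L) • (Omat (i t))ᵀ.mulVec (θhat t + betaMap kz (i t)) + (1 / L) • u t -
          ωhat t • matJ.mulVec (i t))) t) :
    ∀ t : ℝ, HasDerivAt (fun t => θhat t + betaMap kz (i t) - θ)
      (-((kz / L) • (Omat (i t) * (Omat (i t))ᵀ)).mulVec
        (θhat t + betaMap kz (i t) - θ)) t :=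
  IandI_error_dynamics_general L kz θ θhat i u ωhat hi hθhat
end

section
/- Let η ∈ S¹ evolve as η' = (χ ξ̃ − k χ η₂) J η and ξ̃' = −γ χ η₂, with χ(t) ∈ [χ_m, χ_M], χ_m > 0, and k, γ > 0. Then the function V(η, ξ̃) = γ(1 − η₁) + ξ̃²/2 satisfies V' = −k γ χ η₂² ≤ 0 along trajectories; in particular V is nonincreasing and the set {η₂ = 0} contains all points where V' = 0. -/
/-! Along a rotation `η' = ω • J η` one has `η₁' = -ω η₂` (with `η₁ = η t 0`, `η₂ = η t 1`),
so `V = γ (1 - η₁) + ξ̃² / 2` has `V' = γ ω η₂ + ξ̃ ξ̃'`. For `ω = χ ξ̃ - k χ η₂` and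
`ξ̃' = -γ χ η₂` the coupling terms `± γ χ ξ̃ η₂` cancel, leaving `V' = -k γ χ η₂² ≤ 0`. -/

lemma matJ_mulVec_apply_zero (v : Fin 2 → ℝ) : matJ.mulVec v 0 = -v 1 := by
  simp [matJ, Matrix.mulVec, dotProduct, Fin.sum_univ_two]

lemma HasDerivAt.apply_zero_of_rotation {η : ℝ → Fin 2 → ℝ} {ω t : ℝ}
    (h : HasDerivAt η (ω • matJ.mulVec (η t)) t) :
    HasDerivAt (fun s => η s 0) (-(ω * η t 1)) t := by
  simpa only [Pi.smul_apply, matJ_mulVec_apply_zero, smul_eq_mul, mul_neg] using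
    hasDerivAt_pi.mp h 0

lemma HasDerivAt.lyapunov_of_rotation {η : ℝ → Fin 2 → ℝ} {ξ : ℝ → ℝ} {ω ξ' γ t : ℝ}
    (hη : HasDerivAt η (ω • matJ.mulVec (η t)) t) (hξ : HasDerivAt ξ ξ' t) :
    HasDerivAt (fun s => γ * (1 - η s 0) + ξ s ^ 2 / 2) (γ * ω * η t 1 + ξ t * ξ') t := by
  have hV := (((hasDerivAt_const t 1).sub hη.apply_zero_of_rotation).const_mul γ).add
    ((hξ.pow 2).div_const 2)
  exact hV.congr_deriv (by ring)

theorem attitude_observer_lyapunov_general (k γ χm χM : ℝ) (hk : 0 < k) (hγ : 0 < γ)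
    (hχm : 0 < χm) (χ : ℝ → ℝ) (hχ : ∀ t : ℝ, χm ≤ χ t ∧ χ t ≤ χM)
    (η : ℝ → Fin 2 → ℝ) (ξtil : ℝ → ℝ)
    (hη : ∀ t : ℝ, HasDerivAt η
      ((χ t * ξtil t - k * χ t * η t 1) • matJ.mulVec (η t)) t)
    (hξ : ∀ t : ℝ, HasDerivAt ξtil (-(γ * χ t * η t 1)) t) :
    (∀ t : ℝ, HasDerivAt (fun t => γ * (1 - η t 0) + (ξtil t) ^ 2 / 2)
        (-(k * γ * χ t * (η t 1) ^ 2)) t) ∧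
    (∀ t : ℝ, -(k * γ * χ t * (η t 1) ^ 2) ≤ 0) ∧
    (∀ s t : ℝ, s ≤ t →
      γ * (1 - η t 0) + (ξtil t) ^ 2 / 2 ≤ γ * (1 - η s 0) + (ξtil s) ^ 2 / 2) ∧
    (∀ t : ℝ, -(k * γ * χ t * (η t 1) ^ 2) = 0 → η t 1 = 0) := by
  have hχpos : ∀ t, 0 < χ t := fun t => hχm.trans_le (hχ t).1
  have hV : ∀ t, HasDerivAt (fun t => γ * (1 - η t 0) + ξtil t ^ 2 / 2)
      (-(k * γ * χ t * η t 1 ^ 2)) t :=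
    fun t => ((hη t).lyapunov_of_rotation (hξ t)).congr_deriv (by ring)
  have hV_nonpos : ∀ t, -(k * γ * χ t * η t 1 ^ 2) ≤ 0 :=
    fun t => neg_nonpos.mpr (by have := hχpos t; positivity)
  refine ⟨hV, hV_nonpos, fun s t hst => antitone_of_hasDerivAt_nonpos hV hV_nonpos hst,
    fun t h => ?_⟩
  simpa [hk.ne', hγ.ne', (hχpos t).ne'] using h

/-- Lyapunov analysis of the reduced-order attitude observer error system on
S¹ × ℝ: V = γ(1 − η₁) + ξ̃²/2 satisfies V' = −kγχη₂² ≤ 0, so V is nonincreasing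
and V' vanishes only where η₂ = 0. -/
theorem attitude_observer_lyapunov (k γ χm χM : ℝ) (hk : 0 < k) (hγ : 0 < γ)
    (hχm : 0 < χm) (χ : ℝ → ℝ) (hχ : ∀ t : ℝ, χm ≤ χ t ∧ χ t ≤ χM)
    (η : ℝ → Fin 2 → ℝ) (ξtil : ℝ → ℝ)
    (hS : ∀ t : ℝ, (η t 0) ^ 2 + (η t 1) ^ 2 = 1)
    (hη : ∀ t : ℝ, HasDerivAt η
      ((χ t * ξtil t - k * χ t * η t 1) • matJ.mulVec (η t)) t)
    (hξ : ∀ t : ℝ, HasDerivAt ξtil (-(γ * χ t * η t 1)) t) :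
    (∀ t : ℝ, HasDerivAt (fun t => γ * (1 - η t 0) + (ξtil t) ^ 2 / 2)
        (-(k * γ * χ t * (η t 1) ^ 2)) t) ∧
    (∀ t : ℝ, -(k * γ * χ t * (η t 1) ^ 2) ≤ 0) ∧
    (∀ s t : ℝ, s ≤ t →
      γ * (1 - η t 0) + (ξtil t) ^ 2 / 2 ≤ γ * (1 - η s 0) + (ξtil s) ^ 2 / 2) ∧
    (∀ t : ℝ, -(k * γ * χ t * (η t 1) ^ 2) = 0 → η t 1 = 0) :=
  attitude_observer_lyapunov_general k γ χm χM hk hγ hχm χ hχ η ξtil hη hξ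
end
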